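/- arXiv:1207.3728 — 2 statements merged into one kernel-verified Lean document; each statement's English description precedes it below -/
import Mathlib

section
/- Let u : ℤ → ℂ be a sequence with Fourier-type coefficients, p ≥ 2 an integer, s ≥ 0, and N ≥ 1. Define X_k(u) = Σ_{k = j₁+⋯+j_p} u_{j₁}⋯u_{j_p} and the sparse approximation X_k^N(u) = Σ_{k = j₁+⋯+j_p, ⟨j₁⟩⋯⟨j_p⟩ ≤ N} u_{j₁}⋯u_{j_p}, where ⟨j⟩ = max(1,|j|). Then Σ_{k ∈ ℤ} |X_k(u) − X_k^N(u)| ≤ N^{−s} (Σ_{j ∈ ℤ} ⟨j⟩^s |u_j|)^p, provided the right-hand side is finite. -/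
open scoped ENNReal NNReal BigOperators

noncomputable section

/-- The weight `⟨j⟩ = max(1, |j|)` for `j ∈ ℤ`. -/
def wt1 (j : ℤ) : ℕ := max 1 j.natAbs

/-- `X_k(u) = Σ_{j₁+⋯+j_p = k} u_{j₁}⋯u_{j_p}`. -/
def Xk (u : ℤ → ℂ) (p : ℕ) (k : ℤ) : ℂ :=
  ∑' j : {j : Fin p → ℤ // ∑ i, j i = k}, ∏ i, u (j.1 i)

/-- The sparse approximation `X_k^N(u)`, restricting to `⟨j₁⟩⋯⟨j_p⟩ ≤ N`. -/
def XkN (u : ℤ → ℂ) (p N : ℕ) (k : ℤ) : ℂ :=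
  ∑' j : {j : Fin p → ℤ // (∑ i, j i = k) ∧ ∏ i, wt1 (j i) ≤ N}, ∏ i, u (j.1 i)

/-!
Expanding the difference, `X_k(u) - X_k^N(u)` is the sum of `u_{j₁}⋯u_{j_p}` over the multi-indices
with `j₁ + ⋯ + j_p = k` and `⟨j₁⟩⋯⟨j_p⟩ > N`. Summing its absolute value over `k` visits every such
multi-index exactly once, and on each of them `1 ≤ N^{-s} (⟨j₁⟩⋯⟨j_p⟩)^s`, so the total is at most
`N^{-s} Σ_j ∏_i ⟨j_i⟩^s |u_{j_i}| = N^{-s} (Σ_j ⟨j⟩^s |u_j|)^p`.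
-/

theorem ENNReal.tsum_fin_pi_prod_eq_pow {ι : Type*} (g : ι → ℝ≥0∞) (p : ℕ) :
    ∑' j : Fin p → ι, ∏ i, g (j i) = (∑' n, g n) ^ p := by
  induction p with
  | zero => simp
  | succ n ih =>
    rw [← (Fin.consEquiv fun _ => ι).tsum_eq, ENNReal.tsum_prod', pow_succ']
    simp only [Fin.consEquiv_apply, Fin.prod_univ_succ, Fin.cons_zero, Fin.cons_succ,
      ENNReal.tsum_mul_left, ih, ENNReal.tsum_mul_right]

theorem enorm_prod {ι E : Type*} [SeminormedCommRing E] [NormMulClass E] [NormOneClass E]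
    (s : Finset ι) (f : ι → E) : ‖∏ i ∈ s, f i‖ₑ = ∏ i ∈ s, ‖f i‖ₑ := by
  simp only [enorm_eq_nnnorm, nnnorm_prod, ENNReal.ofNNReal_finsetProd]

theorem summable_fin_pi_prod {ι E : Type*} [NormedCommRing E] [NormMulClass E] [NormOneClass E]
    [CompleteSpace E] {u : ι → E} (hu : ∑' n, ‖u n‖ₑ ≠ ∞) (p : ℕ) :
    Summable fun j : Fin p → ι => ∏ i, u (j i) := by
  refine Summable.of_enorm ?_
  simp only [enorm_prod]
  rw [ENNReal.tsum_fin_pi_prod_eq_pow fun n => ‖u n‖ₑ]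
  exact ENNReal.pow_ne_top hu

theorem tsum_enorm_tsum_fiber_le {α β ε : Type*} [TopologicalSpace ε] [ESeminormedAddCommMonoid ε]
    (f : α → ε) (φ : α → β) : ∑' k, ‖∑' a : {a // φ a = k}, f a‖ₑ ≤ ∑' a, ‖f a‖ₑ :=
  calc ∑' k, ‖∑' a : {a // φ a = k}, f a‖ₑ ≤ ∑' k, ∑' a : {a // φ a = k}, ‖f a‖ₑ :=
        ENNReal.tsum_le_tsum fun _ => enorm_tsum_le_tsum_enorm
    _ = ∑' a, ‖f a‖ₑ := ENNReal.tsum_fiberwise (fun a => ‖f a‖ₑ) φ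

theorem Summable.tsum_subtype_sub_tsum_subtype_and {α E : Type*} [NormedAddCommGroup E]
    [CompleteSpace E] {f : α → E} (hf : Summable f) (P Q : α → Prop) :
    ∑' a : {a // P a}, f a - ∑' a : {a // P a ∧ Q a}, f a =
      ∑' a : {a // P a}, {a | ¬Q a}.indicator f a := by
  change ∑' a : {a | P a}, f a - ∑' a : {a | P a ∧ Q a}, f a =
    ∑' a : {a | P a}, {a | ¬Q a}.indicator f a
  rw [tsum_subtype, tsum_subtype, tsum_subtype, ← (hf.indicator _).tsum_sub (hf.indicator _)]
  refine tsum_congr fun a => ?_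
  by_cases hP : P a <;> by_cases hQ : Q a <;> simp [hP, hQ]

theorem Real.one_le_rpow_neg_mul_rpow {N M s : ℝ} (hN : 0 < N) (hNM : N ≤ M) (hs : 0 ≤ s) :
    1 ≤ N ^ (-s) * M ^ s := by
  rw [Real.rpow_neg hN.le, ← div_eq_inv_mul, one_le_div (by positivity)]
  exact Real.rpow_le_rpow hN.le hNM hs

theorem ENNReal.prod_le_ofReal_rpow_neg_mul_prod {ι : Type*} [Fintype ι] {a : ι → ℝ}
    (ha : ∀ i, 0 ≤ a i) {N s : ℝ} (hN : 0 < N) (hNa : N ≤ ∏ i, a i) (hs : 0 ≤ s)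
    (x : ι → ℝ≥0∞) :
    ∏ i, x i ≤ ENNReal.ofReal (N ^ (-s)) * ∏ i, ENNReal.ofReal (a i ^ s) * x i := by
  rw [Finset.prod_mul_distrib, ← mul_assoc]
  refine le_mul_of_one_le_left' ?_
  rw [← ENNReal.ofReal_prod_of_nonneg fun i _ => Real.rpow_nonneg (ha i) s,
    ← ENNReal.ofReal_mul (by positivity), Real.finsetProd_rpow _ _ fun i _ => ha i]
  exact ENNReal.one_le_ofReal.mpr (Real.one_le_rpow_neg_mul_rpow hN hNa hs)

theorem one_le_wt1 (j : ℤ) : 1 ≤ wt1 j := le_max_left _ _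

theorem stmt1_general (p : ℕ) (s : ℝ) (hs : 0 ≤ s) (N : ℕ) (hN : 1 ≤ N)
    (u : ℤ → ℂ)
    (hu : (∑' j : ℤ, ENNReal.ofReal ((wt1 j : ℝ) ^ s) * (‖u j‖₊ : ℝ≥0∞)) ≠ ⊤) :
    ∑' k : ℤ, (‖Xk u p k - XkN u p N k‖₊ : ℝ≥0∞) ≤
      ENNReal.ofReal ((N : ℝ) ^ (-s)) *
        (∑' j : ℤ, ENNReal.ofReal ((wt1 j : ℝ) ^ s) * (‖u j‖₊ : ℝ≥0∞)) ^ p := by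
  simp only [← enorm_eq_nnnorm] at hu ⊢
  set w : ℤ → ℝ≥0∞ := fun j => ENNReal.ofReal ((wt1 j : ℝ) ^ s) * ‖u j‖ₑ
  set f : (Fin p → ℤ) → ℂ := fun j => ∏ i, u (j i)
  have hw : ∀ j, ‖u j‖ₑ ≤ w j := fun j => le_mul_of_one_le_left' <|
    ENNReal.one_le_ofReal.mpr <| Real.one_le_rpow (mod_cast one_le_wt1 j) hs
  have hf : Summable f := summable_fin_pi_prod (ne_top_of_le_ne_top hu (ENNReal.tsum_le_tsum hw)) p
  have htail : ∀ j : Fin p → ℤ, ‖{j | ¬∏ i, wt1 (j i) ≤ N}.indicator f j‖ₑ ≤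
      ENNReal.ofReal ((N : ℝ) ^ (-s)) * ∏ i, w (j i) := by
    intro j
    by_cases hj : ∏ i, wt1 (j i) ≤ N
    · simp [hj]
    · rw [Set.indicator_of_mem hj, enorm_prod]
      refine ENNReal.prod_le_ofReal_rpow_neg_mul_prod (fun i => by positivity)
        (Nat.cast_pos.mpr hN) ?_ hs _
      exact_mod_cast (not_le.mp hj).le
  calc ∑' k, ‖Xk u p k - XkN u p N k‖ₑ
      = ∑' k, ‖∑' j : {j : Fin p → ℤ // ∑ i, j i = k},
          {j | ¬∏ i, wt1 (j i) ≤ N}.indicator f j‖ₑ :=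
        tsum_congr fun k => congrArg enorm <| hf.tsum_subtype_sub_tsum_subtype_and
          (fun j => ∑ i, j i = k) fun j => ∏ i, wt1 (j i) ≤ N
    _ ≤ ∑' j : Fin p → ℤ, ‖{j | ¬∏ i, wt1 (j i) ≤ N}.indicator f j‖ₑ :=
        tsum_enorm_tsum_fiber_le _ _
    _ ≤ ∑' j : Fin p → ℤ, ENNReal.ofReal ((N : ℝ) ^ (-s)) * ∏ i, w (j i) :=
        ENNReal.tsum_le_tsum htail
    _ = ENNReal.ofReal ((N : ℝ) ^ (-s)) * (∑' j, w j) ^ p := by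
        rw [ENNReal.tsum_mul_left, ENNReal.tsum_fin_pi_prod_eq_pow]

theorem stmt1 (p : ℕ) (hp : 2 ≤ p) (s : ℝ) (hs : 0 ≤ s) (N : ℕ) (hN : 1 ≤ N)
    (u : ℤ → ℂ)
    (hu : (∑' j : ℤ, ENNReal.ofReal ((wt1 j : ℝ) ^ s) * (‖u j‖₊ : ℝ≥0∞)) ≠ ⊤) :
    ∑' k : ℤ, (‖Xk u p k - XkN u p N k‖₊ : ℝ≥0∞) ≤
      ENNReal.ofReal ((N : ℝ) ^ (-s)) *
        (∑' j : ℤ, ENNReal.ofReal ((wt1 j : ℝ) ^ s) * (‖u j‖₊ : ℝ≥0∞)) ^ p :=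
  stmt1_general p s hs N hN u hu
end
end

section
/- Let θ ∈ [0,1], p ≥ 1, j = (j₁,...,j_p) ∈ (ℤ^d)^p, and ℓ ∈ ℤ^d. Let μ₁(ℓ,j) ≥ μ₂(ℓ,j) ≥ μ₃(ℓ,j) denote the three largest values among ⟨ℓ⟩, ⟨j₁⟩, ..., ⟨j_p⟩ (with ⟨k⟩ = max(1,|k¹|,...,|k^d|)), and similarly μ₁(j) the largest among ⟨j₁⟩,...,⟨j_p⟩. Define A_θ(ℓ,j) = μ₂(ℓ,j)^θ μ₃(ℓ,j)^{1−θ} / (μ₂(ℓ,j)^θ μ₃(ℓ,j)^{1−θ} + μ₁(ℓ,j) − μ₂(ℓ,j)). Then ⟨ℓ⟩ · A_θ(ℓ,j) ≤ 2 μ₁(j). -/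
open scoped BigOperators

noncomputable section

/-- The weight `⟨j⟩ = max(1, |j¹|, ..., |j^d|)` for `j ∈ ℤ^d`. -/
def wt {d : ℕ} (j : Fin d → ℤ) : ℕ :=
  max 1 (Finset.univ.sup fun i => (j i).natAbs)

/-- `mu k n` is the `n`-th largest value among `⟨k₁⟩, ..., ⟨k_q⟩`
(equal to `1` if `n > q`). -/
def mu {q d : ℕ} (k : Fin q → Fin d → ℤ) (n : ℕ) : ℕ :=
  if n ≤ q then
    ((Multiset.map (fun i => wt (k i)) Finset.univ.val).sort (· ≤ ·)).getD (q - n) 1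
  else 1

/-- `A_θ(k) = μ₂^θ μ₃^{1−θ} / (μ₂^θ μ₃^{1−θ} + μ₁ − μ₂)`. -/
def Atheta {q d : ℕ} (θ : ℝ) (k : Fin q → Fin d → ℤ) : ℝ :=
  ((mu k 2 : ℝ) ^ θ * (mu k 3 : ℝ) ^ (1 - θ)) /
    ((mu k 2 : ℝ) ^ θ * (mu k 3 : ℝ) ^ (1 - θ) + (mu k 1 : ℝ) - (mu k 2 : ℝ))

/-! If `⟨ℓ⟩ ≤ μ₁(j)` the bound follows from `A_θ ≤ 1`. Otherwise `⟨ℓ⟩ = μ₁(ℓ,j)` and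
`μ₂(ℓ,j) = μ₁(j) =: m`, so with `B = μ₂^θ μ₃^{1−θ} ≤ m` (weighted AM-GM) the claim
`⟨ℓ⟩ B ≤ m (B + ⟨ℓ⟩ - m)` is `(⟨ℓ⟩ - m)(m - B) ≥ 0`. In both cases even `⟨ℓ⟩ A_θ ≤ μ₁(j)`. -/

namespace List

variable {α : Type*} [Preorder α] {l : List α} {d : α}

theorem le_getD_zero_of_pairwise_ge (hl : l.Pairwise (· ≥ ·)) {x : α} (hx : x ∈ l) :
    x ≤ l.getD 0 d := by
  cases l with
  | nil => simp at hx
  | cons a l =>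
    rcases mem_cons.1 hx with rfl | hx
    · exact le_rfl
    · exact (pairwise_cons.1 hl).1 x hx

theorem getD_antitone_of_pairwise_ge (hl : l.Pairwise (· ≥ ·)) (hd : ∀ x ∈ l, d ≤ x)
    {m n : ℕ} (hmn : m ≤ n) : l.getD n d ≤ l.getD m d := by
  rcases lt_or_ge n l.length with hn | hn
  · rw [getD_eq_getElem _ _ hn, getD_eq_getElem _ _ (hmn.trans_lt hn)]
    exact hl.rel_get_of_le (a := ⟨m, hmn.trans_lt hn⟩) (b := ⟨n, hn⟩) hmn
  · rw [getD_eq_default _ _ hn]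
    rcases lt_or_ge m l.length with hm | hm
    · rw [getD_eq_getElem _ _ hm]
      exact hd _ (getElem_mem hm)
    · rw [getD_eq_default _ _ hm]

end List

lemma one_le_wt {d : ℕ} (j : Fin d → ℤ) : 1 ≤ wt j := le_max_left _ _

section SortedWeights

variable {q d : ℕ}

def weightsDesc (k : Fin q → Fin d → ℤ) : List ℕ :=
  ((Multiset.map (fun i => wt (k i)) Finset.univ.val).sort (· ≤ ·)).reverse

lemma coe_weightsDesc (k : Fin q → Fin d → ℤ) :
    (weightsDesc k : Multiset ℕ) = Multiset.map (fun i => wt (k i)) Finset.univ.val := by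
  rw [weightsDesc, Multiset.coe_reverse, Multiset.sort_eq]

lemma mem_weightsDesc {k : Fin q → Fin d → ℤ} {x : ℕ} :
    x ∈ weightsDesc k ↔ ∃ i, wt (k i) = x := by
  rw [← Multiset.mem_coe, coe_weightsDesc]
  simp

lemma pairwise_weightsDesc (k : Fin q → Fin d → ℤ) : (weightsDesc k).Pairwise (· ≥ ·) :=
  List.pairwise_reverse.2 (Multiset.pairwise_sort _ _)

lemma one_le_of_mem_weightsDesc {k : Fin q → Fin d → ℤ} {x : ℕ} (hx : x ∈ weightsDesc k) :
    1 ≤ x := by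
  obtain ⟨i, rfl⟩ := mem_weightsDesc.1 hx
  exact one_le_wt _

/-- Reading `mu` from the decreasing list removes the case distinction `n ≤ q`. -/
lemma mu_eq_getD (k : Fin q → Fin d → ℤ) {n : ℕ} (hn : 1 ≤ n) :
    mu k n = (weightsDesc k).getD (n - 1) 1 := by
  unfold mu weightsDesc
  have hlen : ((Multiset.map (fun i => wt (k i)) Finset.univ.val).sort (· ≤ ·)).length = q := by
    simp
  split_ifs with hnq
  · rw [List.getD_reverse _ (by omega), hlen, show q - 1 - (n - 1) = q - n by omega]
  · rw [List.getD_eq_default _ _ (by rw [List.length_reverse]; omega)]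

lemma one_le_mu (k : Fin q → Fin d → ℤ) (n : ℕ) : 1 ≤ mu k n := by
  rcases Nat.eq_zero_or_pos n with rfl | hn
  · simp [mu]
  rw [mu_eq_getD k hn]
  rcases lt_or_ge (n - 1) (weightsDesc k).length with h | h
  · rw [List.getD_eq_getElem _ _ h]
    exact one_le_of_mem_weightsDesc (List.getElem_mem h)
  · rw [List.getD_eq_default _ _ h]

lemma mu_antitone (k : Fin q → Fin d → ℤ) {m n : ℕ} (hm : 1 ≤ m) (hmn : m ≤ n) :
    mu k n ≤ mu k m := by
  rw [mu_eq_getD k hm, mu_eq_getD k (hm.trans hmn)]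
  exact List.getD_antitone_of_pairwise_ge (pairwise_weightsDesc k)
    (fun _ => one_le_of_mem_weightsDesc) (by omega)

lemma wt_le_mu_one (k : Fin q → Fin d → ℤ) (i : Fin q) : wt (k i) ≤ mu k 1 := by
  rw [mu_eq_getD k le_rfl]
  exact List.le_getD_zero_of_pairwise_ge (pairwise_weightsDesc k) (mem_weightsDesc.2 ⟨i, rfl⟩)

lemma weightsDesc_cons {ℓ : Fin d → ℤ} {j : Fin q → Fin d → ℤ} (h : ∀ i, wt (j i) ≤ wt ℓ) :
    weightsDesc (Fin.cons ℓ j : Fin (q + 1) → Fin d → ℤ) = wt ℓ :: weightsDesc j := by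
  refine List.Perm.eq_of_pairwise' (pairwise_weightsDesc _) ?_ ?_
  · refine List.pairwise_cons.2 ⟨fun x hx => ?_, pairwise_weightsDesc j⟩
    obtain ⟨i, rfl⟩ := mem_weightsDesc.1 hx
    exact h i
  · rw [← Multiset.coe_eq_coe, coe_weightsDesc, ← Multiset.cons_coe, coe_weightsDesc]
    simp [Fin.univ_val_map, List.ofFn_succ]

lemma mu_cons_one {ℓ : Fin d → ℤ} {j : Fin q → Fin d → ℤ} (h : ∀ i, wt (j i) ≤ wt ℓ) :
    mu (Fin.cons ℓ j : Fin (q + 1) → Fin d → ℤ) 1 = wt ℓ := by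
  rw [mu_eq_getD _ le_rfl, weightsDesc_cons h]
  rfl

lemma mu_cons_succ {ℓ : Fin d → ℤ} {j : Fin q → Fin d → ℤ} (h : ∀ i, wt (j i) ≤ wt ℓ)
    {n : ℕ} (hn : 1 ≤ n) : mu (Fin.cons ℓ j : Fin (q + 1) → Fin d → ℤ) (n + 1) = mu j n := by
  rw [mu_eq_getD _ (by omega), mu_eq_getD _ hn, weightsDesc_cons h]
  obtain ⟨n, rfl⟩ := Nat.exists_eq_add_of_le' hn
  rfl

end SortedWeights

lemma rpow_mul_rpow_one_sub_le {θ b c : ℝ} (hθ₀ : 0 ≤ θ) (hθ₁ : θ ≤ 1) (hc : 0 ≤ c)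
    (hcb : c ≤ b) : b ^ θ * c ^ (1 - θ) ≤ b :=
  calc b ^ θ * c ^ (1 - θ) ≤ θ * b + (1 - θ) * c :=
        Real.geom_mean_le_arith_mean2_weighted hθ₀ (by linarith) (hc.trans hcb) hc (by ring)
    _ ≤ b := by nlinarith

lemma mul_div_add_sub_le {B m t : ℝ} (hB : 0 < B) (hBm : B ≤ m) (hmt : m ≤ t) :
    t * (B / (B + t - m)) ≤ m := by
  rw [← mul_div_assoc, div_le_iff₀ (by linarith)]
  nlinarith [mul_nonneg (sub_nonneg.2 hmt) (sub_nonneg.2 hBm)]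

section Atheta

variable {q d : ℕ} (θ : ℝ) (k : Fin q → Fin d → ℤ)

lemma Atheta_numerator_pos : 0 < (mu k 2 : ℝ) ^ θ * (mu k 3 : ℝ) ^ (1 - θ) := by
  have := one_le_mu k 2
  have := one_le_mu k 3
  positivity

lemma Atheta_numerator_le (hθ₀ : 0 ≤ θ) (hθ₁ : θ ≤ 1) :
    (mu k 2 : ℝ) ^ θ * (mu k 3 : ℝ) ^ (1 - θ) ≤ mu k 2 :=
  rpow_mul_rpow_one_sub_le hθ₀ hθ₁ (Nat.cast_nonneg _)
    (by exact_mod_cast mu_antitone k (by norm_num) (by norm_num : 2 ≤ 3))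

lemma Atheta_le_one : Atheta θ k ≤ 1 := by
  have h21 : (mu k 2 : ℝ) ≤ mu k 1 := by
    exact_mod_cast mu_antitone k le_rfl (by norm_num : 1 ≤ 2)
  have := Atheta_numerator_pos θ k
  exact div_le_one_of_le₀ (by linarith) (by linarith)

end Atheta

theorem wt_mul_Atheta_cons_le_mu_one {q d : ℕ} {θ : ℝ} (hθ₀ : 0 ≤ θ) (hθ₁ : θ ≤ 1)
    (ℓ : Fin d → ℤ) (j : Fin q → Fin d → ℤ) :
    (wt ℓ : ℝ) * Atheta θ (Fin.cons ℓ j : Fin (q + 1) → Fin d → ℤ) ≤ mu j 1 := by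
  by_cases h : wt ℓ ≤ mu j 1
  · calc (wt ℓ : ℝ) * Atheta θ (Fin.cons ℓ j : Fin (q + 1) → Fin d → ℤ) ≤ wt ℓ :=
          mul_le_of_le_one_right (Nat.cast_nonneg _) (Atheta_le_one θ _)
      _ ≤ mu j 1 := by exact_mod_cast h
  · have hdom : ∀ i, wt (j i) ≤ wt ℓ := fun i => (wt_le_mu_one j i).trans (by omega)
    have h₁ : mu (Fin.cons ℓ j : Fin (q + 1) → Fin d → ℤ) 1 = wt ℓ := mu_cons_one hdom
    have h₂ : mu (Fin.cons ℓ j : Fin (q + 1) → Fin d → ℤ) 2 = mu j 1 := mu_cons_succ hdom le_rfl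
    have hpos := Atheta_numerator_pos θ (Fin.cons ℓ j : Fin (q + 1) → Fin d → ℤ)
    have hle := Atheta_numerator_le θ (Fin.cons ℓ j : Fin (q + 1) → Fin d → ℤ) hθ₀ hθ₁
    rw [h₂] at hpos hle
    rw [Atheta, h₁, h₂]
    exact mul_div_add_sub_le hpos hle (by exact_mod_cast (not_le.1 h).le)

theorem stmt6_general (d p : ℕ) (θ : ℝ) (hθ : 0 ≤ θ ∧ θ ≤ 1)
    (ℓ : Fin d → ℤ) (j : Fin p → Fin d → ℤ) :
    (wt ℓ : ℝ) * Atheta θ (Fin.cons ℓ j) ≤ 2 * (mu j 1 : ℝ) :=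
  (wt_mul_Atheta_cons_le_mu_one hθ.1 hθ.2 ℓ j).trans
    (le_mul_of_one_le_left (Nat.cast_nonneg _) one_le_two)

theorem stmt6 (d p : ℕ) (hd : 1 ≤ d) (hp : 1 ≤ p) (θ : ℝ) (hθ : 0 ≤ θ ∧ θ ≤ 1)
    (ℓ : Fin d → ℤ) (j : Fin p → Fin d → ℤ) :
    (wt ℓ : ℝ) * Atheta θ (Fin.cons ℓ j) ≤ 2 * (mu j 1 : ℝ) :=
  stmt6_general d p θ hθ ℓ j
end
end
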